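/- If x ∈ GL₆(𝕂) satisfies: the lower right 2×4 corner block of x has rank 1 and the lower right 2×2 corner block of x has rank 1, then x·x_left does not belong to Lie(P)·x + x·Lie(P)^τ. -/

import Mathlib

/-!
Write `x` in `2 × 2` blocks `x_{ij}` and pick a row vector `v ≠ 0` killing `[x₃₂ x₃₃]`, which
has rank one. If `x·x_left = p·x + x·q`, the bottom block row of this equation reads
`x₃₁ = p₃₃x₃₂ + x₃₂q₂₂ + x₃₃q₃₂` and `x₃₂ = p₃₃x₃₃ + x₃₃q₃₃`. Multiplying the second by `v`
puts `v p₃₃` in the left kernel of `x₃₃`, a line because `x₃₃` has rank one, so `v p₃₃ = c v`;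
multiplying the first by `v` then gives `v x₃₁ = 0`. Hence `v` kills the whole bottom block row
of `x`, which contradicts invertibility.
-/

open Matrix

/-- The Lie algebra of the parabolic `P ⊆ GL₆(𝕂)`: block upper triangular `6 × 6`
matrices with respect to the partition `(2,2,2)` of `6`. -/
def LieP (𝕂 : Type*) [RCLike 𝕂] : Set (Matrix (Fin 6) (Fin 6) 𝕂) :=
  {p | ∀ i j : Fin 6, (j : ℕ) / 2 < (i : ℕ) / 2 → p i j = 0}

/-- `Lie(P)^τ`, the image of `Lie(P)` under matrix transpose. -/
def LiePtau (𝕂 : Type*) [RCLike 𝕂] : Set (Matrix (Fin 6) (Fin 6) 𝕂) :=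
  {q | qᵀ ∈ LieP 𝕂}

/-- The block matrix `x_left = [[0,I₂,0],[0,0,I₂],[0,0,0]]` (2×2 blocks). -/
def xLeft (𝕂 : Type*) [RCLike 𝕂] : Matrix (Fin 6) (Fin 6) 𝕂 :=
  Matrix.of fun i j => if (j : ℕ) = (i : ℕ) + 2 then 1 else 0

/-- `x_right = x_left^τ`. -/
def xRight (𝕂 : Type*) [RCLike 𝕂] : Matrix (Fin 6) (Fin 6) 𝕂 := (xLeft 𝕂)ᵀ

/-- The set `Lie(P)·x + x·Lie(P)^τ = {p·x + x·q : p ∈ Lie(P), q ∈ Lie(P)^τ}`. -/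
def tanSet {𝕂 : Type*} [RCLike 𝕂] (x : Matrix (Fin 6) (Fin 6) 𝕂) :
    Set (Matrix (Fin 6) (Fin 6) 𝕂) :=
  {m | ∃ p ∈ LieP 𝕂, ∃ q ∈ LiePtau 𝕂, m = p * x + x * q}

/-- The lower right `i × j` corner block of a `6 × 6` matrix. -/
def corner {𝕂 : Type*} [RCLike 𝕂] (i j : ℕ) (hi : i ≤ 6) (hj : j ≤ 6)
    (x : Matrix (Fin 6) (Fin 6) 𝕂) : Matrix (Fin i) (Fin j) 𝕂 :=
  Matrix.of fun a b =>
    x ⟨6 - i + a.1, by have := a.2; omega⟩ ⟨6 - j + b.1, by have := b.2; omega⟩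

/-- The rank matrix `R(x) = [[r₄ₓ₄(x), r₄ₓ₂(x)], [r₂ₓ₄(x), r₂ₓ₂(x)]]`, where
`r_{i×j}(x)` is the rank of the lower right `i × j` corner block of `x`. -/
noncomputable def rankMatrix {𝕂 : Type*} [RCLike 𝕂] (x : Matrix (Fin 6) (Fin 6) 𝕂) :
    Matrix (Fin 2) (Fin 2) ℕ :=
  !![(corner 4 4 (by norm_num) (by norm_num) x).rank,
     (corner 4 2 (by norm_num) (by norm_num) x).rank;
     (corner 2 4 (by norm_num) (by norm_num) x).rank,
     (corner 2 2 (by norm_num) (by norm_num) x).rank]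

open Module

namespace Matrix

variable {K : Type*} [Field K] {m n : Type*} [Fintype m] [Fintype n]

theorem finrank_ker_vecMulLinear_add_rank (M : Matrix m n K) :
    finrank K (LinearMap.ker M.vecMulLinear) + M.rank = Fintype.card m := by
  rw [← rank_transpose, rank, mulVecLin_transpose, add_comm,
    LinearMap.finrank_range_add_finrank_ker, finrank_fintype_fun_eq_card]

theorem exists_ne_zero_vecMul_eq_zero_of_rank_lt (M : Matrix m n K)
    (h : M.rank < Fintype.card m) : ∃ v ≠ 0, v ᵥ* M = 0 := by
  have hpos : 0 < finrank K (LinearMap.ker M.vecMulLinear) := by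
    have := M.finrank_ker_vecMulLinear_add_rank; omega
  obtain ⟨⟨v, hv⟩, hv0⟩ := finrank_pos_iff_exists_ne_zero.mp hpos
  exact ⟨v, fun h => hv0 (Subtype.ext h), hv⟩

theorem exists_smul_eq_of_vecMul_eq_zero {M : Matrix m n K} (h : M.rank + 1 = Fintype.card m)
    {v w : m → K} (hv : v ≠ 0) (hvM : v ᵥ* M = 0) (hwM : w ᵥ* M = 0) : ∃ c : K, c • v = w := by
  have hker : finrank K (LinearMap.ker M.vecMulLinear) = 1 := by
    have := M.finrank_ker_vecMulLinear_add_rank; omega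
  obtain ⟨c, hc⟩ := (finrank_eq_one_iff_of_nonzero' (⟨v, hvM⟩ : LinearMap.ker M.vecMulLinear)
    (fun h => hv (congrArg Subtype.val h))).mp hker ⟨w, hwM⟩
  exact ⟨c, congrArg Subtype.val hc⟩

theorem BlockTriangular.mulVec_apply_eq_zero {α : Type*} [LinearOrder α] {R : Type*}
    [NonUnitalNonAssocSemiring R] {M : Matrix m m R} {b : m → α} (hM : M.BlockTriangular b)
    {k : α} {y : m → R} (hy : ∀ i, k ≤ b i → y i = 0) {j : m} (hj : k ≤ b j) :
    (M *ᵥ y) j = 0 := by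
  refine Finset.sum_eq_zero fun i _ => ?_
  rcases lt_or_ge (b i) k with hi | hi
  · exact mul_eq_zero_of_left (hM (hi.trans_le hj)) _
  · exact mul_eq_zero_of_right _ (hy i hi)

theorem submatrix_mul_of_lower_left_eq_zero {R : Type*} [NonUnitalNonAssocSemiring R]
    {a c : ℕ} {l : Type*} (M : Matrix (Fin (a + c)) (Fin (a + c)) R)
    (hM : ∀ i j, M (Fin.natAdd a i) (Fin.castAdd c j) = 0) (N : Matrix (Fin (a + c)) l R) :
    (M * N).submatrix (Fin.natAdd a) id =
      M.submatrix (Fin.natAdd a) (Fin.natAdd a) * N.submatrix (Fin.natAdd a) id := by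
  ext i j
  simp [mul_apply, Fin.sum_univ_add, hM]

end Matrix

theorem vecMul_xLeft_natAdd {𝕂 : Type*} [RCLike 𝕂] (y : Fin 6 → 𝕂) (j : Fin 4) :
    (y ᵥ* xLeft 𝕂) (Fin.natAdd 2 j) = y (Fin.castAdd 2 j) := by
  simp only [vecMul, dotProduct, xLeft, Fin.natAdd, Fin.castAdd]
  fin_cases j <;> simp [Fin.sum_univ_six]

theorem vecMul_eq_zero_of_mul_xLeft_eq {𝕂 : Type*} [RCLike 𝕂] {R : Matrix (Fin 2) (Fin 6) 𝕂}
    {P : Matrix (Fin 2) (Fin 2) 𝕂} {q : Matrix (Fin 6) (Fin 6) 𝕂} (hq : q ∈ LiePtau 𝕂)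
    (hR : R * xLeft 𝕂 = P * R + R * q)
    (hrank : (R.submatrix id (Fin.natAdd 4 : Fin 2 → Fin 6)).rank = 1)
    {v : Fin 2 → 𝕂} (hv0 : v ≠ 0) (hv : v ᵥ* R.submatrix id (Fin.natAdd 2 : Fin 4 → Fin 6) = 0) :
    v ᵥ* R = 0 := by
  set y := v ᵥ* R with hy_def
  have hy (j : Fin 4) : y (Fin.natAdd 2 j) = 0 := congrFun hv j
  have hrow : y ᵥ* xLeft 𝕂 = (v ᵥ* P) ᵥ* R + y ᵥ* q := by
    rw [hy_def, vecMul_vecMul, hR, vecMul_add, vecMul_vecMul, vecMul_vecMul]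
  have hyq (j : Fin 4) : (y ᵥ* q) (Fin.natAdd 2 j) = 0 := by
    rw [← mulVec_transpose]
    refine BlockTriangular.mulVec_apply_eq_zero (b := fun i : Fin 6 => (i : ℕ) / 2) hq (k := 1)
      (fun i hi => ?_) (by simp)
    convert hy ⟨i - 2, by omega⟩
    ext; simp; omega
  have hlast (j : Fin 2) : (Fin.natAdd 4 j : Fin 6) = Fin.natAdd 2 (Fin.natAdd 2 j) := by
    ext; simp; omega
  -- the last block column of `hR` gives `0 = (v P) x₃₃`
  have hvP : (v ᵥ* P) ᵥ* R.submatrix id (Fin.natAdd 4 : Fin 2 → Fin 6) = 0 := by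
    funext j
    have h := congrFun hrow (Fin.natAdd 2 (Fin.natAdd 2 j))
    rw [vecMul_xLeft_natAdd, Pi.add_apply, hyq, add_zero] at h
    rw [← hlast, show y (Fin.castAdd 2 (Fin.natAdd 2 j)) = 0 from hy (Fin.castAdd 2 j)] at h
    exact h.symm
  have hv_last_block : v ᵥ* R.submatrix id (Fin.natAdd 4 : Fin 2 → Fin 6) = 0 := by
    funext j
    rw [show (v ᵥ* R.submatrix id _) j = y (Fin.natAdd 4 j) from rfl, hlast]
    exact hy (Fin.natAdd 2 j)
  obtain ⟨c, hc⟩ := exists_smul_eq_of_vecMul_eq_zero (by rw [hrank]; rfl) hv0 hv_last_block hvP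
  -- the middle block column of `hR` gives `v x₃₁ = c (v x₃₂) = 0`
  have hfirst (j : Fin 2) : y (Fin.castAdd 4 j) = 0 := by
    have h := congrFun hrow (Fin.natAdd 2 (Fin.castAdd 2 j))
    rw [vecMul_xLeft_natAdd, Pi.add_apply, hyq, add_zero, ← hc, smul_vecMul, Pi.smul_apply,
      ← hy_def, hy, smul_zero] at h
    exact h
  funext j
  exact Fin.addCases (m := 2) (n := 4) (motive := fun j => y j = 0) hfirst hy j

theorem xLeft_transversal_of_second_row_one_one {𝕂 : Type*} [RCLike 𝕂]
    (x : Matrix (Fin 6) (Fin 6) 𝕂) (hx : IsUnit x.det)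
    (h24 : (corner 2 4 (by norm_num) (by norm_num) x).rank = 1)
    (h22 : (corner 2 2 (by norm_num) (by norm_num) x).rank = 1) :
    x * xLeft 𝕂 ∉ tanSet x := by
  rintro ⟨p, hp, q, hq, heq⟩
  set R := x.submatrix (Fin.natAdd 4 : Fin 2 → Fin 6) id
  have hp_lower (i : Fin 2) (j : Fin 4) : p (Fin.natAdd 4 i) (Fin.castAdd 2 j) = 0 :=
    hp _ _ (by simp; omega)
  have hR : R * xLeft 𝕂 = p.submatrix (Fin.natAdd 4) (Fin.natAdd 4) * R + R * q := by
    have hpx := submatrix_mul_of_lower_left_eq_zero (a := 4) (c := 2) p hp_lower x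
    ext i j
    exact (congrFun (congrFun heq (Fin.natAdd 4 i)) j).trans
      (congrArg (· + _) (congrFun (congrFun hpx i) j))
  obtain ⟨v, hv0, hv⟩ := exists_ne_zero_vecMul_eq_zero_of_rank_lt
    (corner 2 4 (by norm_num) (by norm_num) x) (by rw [h24]; decide)
  have hR_rows : LinearIndependent 𝕂 R.row :=
    (linearIndependent_rows_of_isUnit ((isUnit_iff_isUnit_det x).mpr hx)).comp _
      (Fin.natAdd_injective 2 4)
  exact hv0 (vecMul_injective_iff.mpr hR_rows
    ((vecMul_eq_zero_of_mul_xLeft_eq hq hR h22 hv0 hv).trans (zero_vecMul R).symm))
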